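/- Jacobi triple product (second form): ∑_{j=-∞}^∞ z^j q^{j^2} = ∏_{n=1}^∞ (1 - q^{2n})(1 + z q^{2n-1})(1 + z^{-1} q^{2n-1}), as formal Laurent series in z over ℤ[[q]]. -/

import Mathlib

/-!
The `z`-coefficients `A_B(j)` of the finite product `∏_{m ≤ B} (1 + z q^{2m-1}) (1 + z⁻¹ q^{2m-1})`
obey a three-term recurrence in `B`, and by induction `A_B(j)` is `q^{j²}` times the Gaussian
binomial `[2B, B + j]` in base `q²`. Cleared of denominators this reads
`A_B(j) (q²;q²)_{B-j} (q²;q²)_{B+j} = q^{j²} (q²;q²)_{2B}` and holds in every commutative ring.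
Over `ℤ⟦q⟧` the Pochhammer symbols are units, so `(q²;q²)_B A_B(j)` is `q^{j²}` times factors
`1 - q^{2i}` with `i > B - |j|`, all of which are `1` modulo `q^{D+1}` once `B ≥ D + |j|`.
-/

open Finset PowerSeries

section
variable {R : Type*} [CommRing R]

def qPochhammer (q : R) (n : ℕ) : R := ∏ i ∈ Icc 1 n, (1 - q ^ i)

@[simp]
theorem qPochhammer_zero (q : R) : qPochhammer q 0 = 1 := by
  simp [qPochhammer]

theorem qPochhammer_succ (q : R) (n : ℕ) :
    qPochhammer q (n + 1) = qPochhammer q n * (1 - q ^ (n + 1)) :=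
  prod_Icc_succ_top (by omega) _

theorem qPochhammer_mul_prod_Ioc (q : R) {m n : ℕ} (h : m ≤ n) :
    qPochhammer q m * ∏ i ∈ Ioc m n, (1 - q ^ i) = qPochhammer q n := by
  have hIcc (k : ℕ) : Icc 1 k = Ioc 0 k := Icc_add_one_left_eq_Ioc 0 k
  simp only [qPochhammer, hIcc]
  exact prod_Ioc_consecutive _ (Nat.zero_le m) h

theorem HahnSeries.coeff_mul_one_add_single_mul_one_add_single (x : HahnSeries ℤ R) (r : R)
    (j : ℤ) :
    (x * ((1 + single 1 r) * (1 + single (-1) r))).coeff j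
      = x.coeff j * (1 + r * r) + r * (x.coeff (j - 1) + x.coeff (j + 1)) := by
  simp only [mul_add, add_mul, one_mul, mul_one, single_mul_single, coeff_add, coeff_mul_single,
    sub_neg_eq_add, add_neg_cancel, sub_zero]
  ring

noncomputable def jacobiProd (q : R) (B : ℕ) : HahnSeries ℤ R :=
  ∏ m ∈ Icc 1 B,
    (1 + HahnSeries.single 1 (q ^ (2 * m - 1))) * (1 + HahnSeries.single (-1) (q ^ (2 * m - 1)))

theorem coeff_jacobiProd_zero (q : R) (j : ℤ) :
    (jacobiProd q 0).coeff j = if j = 0 then 1 else 0 := by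
  simp [jacobiProd, HahnSeries.coeff_one]

theorem coeff_jacobiProd_succ (q : R) (B : ℕ) (j : ℤ) :
    (jacobiProd q (B + 1)).coeff j
      = (jacobiProd q B).coeff j * (1 + q ^ (2 * B + 1) * q ^ (2 * B + 1))
        + q ^ (2 * B + 1) * ((jacobiProd q B).coeff (j - 1) + (jacobiProd q B).coeff (j + 1)) := by
  rw [jacobiProd, prod_Icc_succ_top (by omega), show 2 * (B + 1) - 1 = 2 * B + 1 by omega,
    HahnSeries.coeff_mul_one_add_single_mul_one_add_single, jacobiProd]

theorem coeff_jacobiProd_neg (q : R) (B : ℕ) (j : ℤ) :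
    (jacobiProd q B).coeff (-j) = (jacobiProd q B).coeff j := by
  induction B generalizing j with
  | zero => simp [coeff_jacobiProd_zero]
  | succ B ih =>
    rw [coeff_jacobiProd_succ, coeff_jacobiProd_succ, ih, show -j - 1 = -(j + 1) by ring,
      show -j + 1 = -(j - 1) by ring, ih, ih]
    ring

theorem coeff_jacobiProd_eq_zero (q : R) {B : ℕ} {j : ℤ} (h : B < j.natAbs) :
    (jacobiProd q B).coeff j = 0 := by
  induction B generalizing j with
  | zero => rw [coeff_jacobiProd_zero, if_neg (by omega)]
  | succ B ih =>
    rw [coeff_jacobiProd_succ, ih (by omega), ih (by omega), ih (by omega)]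
    ring

theorem coeff_jacobiProd_pred_mul_qPochhammer (q : R) {B a b : ℕ} {j : ℤ}
    (ih : ∀ (j : ℤ) (a b : ℕ), (a : ℤ) = B - j → (b : ℤ) = B + j →
      (jacobiProd q B).coeff j * qPochhammer (q ^ 2) a * qPochhammer (q ^ 2) b
        = q ^ j.natAbs ^ 2 * qPochhammer (q ^ 2) (a + b))
    (ha : (a : ℤ) = B - j) (hb : (b : ℤ) = B + j) :
    q ^ (2 * B + 1) * (jacobiProd q B).coeff (j - 1) * qPochhammer (q ^ 2) (a + 1)
        * qPochhammer (q ^ 2) (b + 1)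
      = q ^ j.natAbs ^ 2 * (q ^ 2) ^ (a + 1) * (1 - (q ^ 2) ^ b) * (1 - (q ^ 2) ^ (b + 1))
        * qPochhammer (q ^ 2) (a + b) := by
  rcases b with _ | b
  · -- `j - 1 = -(B + 1)` lies outside the support, and `1 - (q ^ 2) ^ 0 = 0`.
    rw [coeff_jacobiProd_eq_zero q (by omega)]
    simp
  · have hpred := ih (j - 1) (a + 1) b (by omega) (by omega)
    have hexp :
        q ^ (2 * B + 1) * q ^ (j - 1).natAbs ^ 2 = q ^ j.natAbs ^ 2 * (q ^ 2) ^ (a + 1) := by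
      rw [← pow_add, ← pow_mul, ← pow_add]
      congr 1
      zify
      rw [sq_abs, sq_abs]
      linear_combination (-2 : ℤ) * ha
    rw [show a + 1 + b = a + (b + 1) by ring] at hpred
    rw [qPochhammer_succ _ (b + 1), qPochhammer_succ _ b]
    linear_combination
      q ^ (2 * B + 1) * (1 - (q ^ 2) ^ (b + 1)) * (1 - (q ^ 2) ^ (b + 1 + 1)) * hpred
        + (1 - (q ^ 2) ^ (b + 1)) * (1 - (q ^ 2) ^ (b + 1 + 1)) * qPochhammer (q ^ 2) (a + (b + 1))
          * hexp

theorem coeff_jacobiProd_succ_mul_qPochhammer (q : R) {B : ℕ}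
    (ih : ∀ (j : ℤ) (a b : ℕ), (a : ℤ) = B - j → (b : ℤ) = B + j →
      (jacobiProd q B).coeff j * qPochhammer (q ^ 2) a * qPochhammer (q ^ 2) b
        = q ^ j.natAbs ^ 2 * qPochhammer (q ^ 2) (a + b))
    (j : ℤ) (a b : ℕ) (ha : (a : ℤ) = (B + 1 : ℕ) - j)
    (hb : (b : ℤ) = (B + 1 : ℕ) + j) :
    (jacobiProd q (B + 1)).coeff j * qPochhammer (q ^ 2) a * qPochhammer (q ^ 2) b
      = q ^ j.natAbs ^ 2 * qPochhammer (q ^ 2) (a + b) := by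
  wlog hb0 : b ≠ 0 generalizing j a b
  · have := this (-j) b a (by omega) (by omega) (by omega)
    rwa [coeff_jacobiProd_neg, Int.natAbs_neg, mul_right_comm, add_comm b a] at this
  rw [coeff_jacobiProd_succ]
  rcases a with _ | a
  · obtain rfl : j = ((B + 1 : ℕ) : ℤ) := by omega
    obtain rfl : b = 2 * B + 2 := by omega
    have htop := ih B 0 (2 * B) (by omega) (by omega)
    rw [Int.natAbs_natCast, zero_add, qPochhammer_zero, mul_one] at htop
    rw [coeff_jacobiProd_eq_zero q (by omega), coeff_jacobiProd_eq_zero q (j := _ + 1) (by omega),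
      Int.natAbs_natCast, Nat.cast_add, Nat.cast_one, add_sub_cancel_right, qPochhammer_zero,
      mul_one, zero_add, show 2 * B + 2 = 2 * B + 1 + 1 by ring, qPochhammer_succ,
      qPochhammer_succ]
    linear_combination
      q ^ (2 * B + 1) * (1 - (q ^ 2) ^ (2 * B + 1)) * (1 - (q ^ 2) ^ (2 * B + 1 + 1)) * htop
  · obtain ⟨b, rfl⟩ := Nat.exists_eq_succ_of_ne_zero hb0
    have hmid := ih j a b (by omega) (by omega)
    have hleft := coeff_jacobiProd_pred_mul_qPochhammer q ih (j := j) (a := a) (b := b)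
      (by omega) (by omega)
    have hright := coeff_jacobiProd_pred_mul_qPochhammer q ih (j := -j) (a := b) (b := a)
      (by omega) (by omega)
    rw [show -j - 1 = -(j + 1) by ring, coeff_jacobiProd_neg, Int.natAbs_neg, add_comm b a]
      at hright
    have hsq : q ^ (2 * B + 1) * q ^ (2 * B + 1) = (q ^ 2) ^ (a + b + 1) := by
      rw [show a + b = 2 * B by omega]; ring
    rw [show a + 1 + (b + 1) = a + b + 1 + 1 by ring]
    simp only [qPochhammer_succ] at hleft hright ⊢
    linear_combination (1 + q ^ (2 * B + 1) * q ^ (2 * B + 1)) * (1 - (q ^ 2) ^ (a + 1))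
        * (1 - (q ^ 2) ^ (b + 1)) * hmid + hleft + hright
      + q ^ j.natAbs ^ 2 * qPochhammer (q ^ 2) (a + b) * (1 - (q ^ 2) ^ (a + 1))
        * (1 - (q ^ 2) ^ (b + 1)) * hsq

theorem coeff_jacobiProd_mul_qPochhammer (q : R) (B : ℕ) (j : ℤ) (a b : ℕ)
    (ha : (a : ℤ) = B - j) (hb : (b : ℤ) = B + j) :
    (jacobiProd q B).coeff j * qPochhammer (q ^ 2) a * qPochhammer (q ^ 2) b
      = q ^ j.natAbs ^ 2 * qPochhammer (q ^ 2) (a + b) := by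
  induction B generalizing j a b with
  | zero =>
    obtain rfl : j = 0 := by omega
    obtain rfl : a = 0 := by omega
    obtain rfl : b = 0 := by omega
    simp [coeff_jacobiProd_zero]
  | succ B ih => exact coeff_jacobiProd_succ_mul_qPochhammer q ih j a b ha hb

theorem coeff_jacobiProd_natAbs (q : R) (B : ℕ) (j : ℤ) :
    (jacobiProd q B).coeff j.natAbs = (jacobiProd q B).coeff j := by
  rcases Int.natAbs_eq j with h | h <;> conv_rhs => rw [h]
  rw [coeff_jacobiProd_neg]

theorem prod_C_mul_eq_C_qPochhammer_mul_jacobiProd (q : R) (B : ℕ) :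
    ∏ m ∈ Icc 1 B, (HahnSeries.C (1 - q ^ (2 * m)) * (1 + HahnSeries.single 1 (q ^ (2 * m - 1)))
        * (1 + HahnSeries.single (-1) (q ^ (2 * m - 1))))
      = HahnSeries.C (qPochhammer (q ^ 2) B) * jacobiProd q B := by
  simp only [qPochhammer, jacobiProd, map_prod, ← prod_mul_distrib, mul_assoc, ← pow_mul]

theorem pow_dvd_prod_one_sub_pow_sub_one {ι : Type*} (x : R) {n : ℕ} {s : Finset ι}
    {f : ι → ℕ} (h : ∀ i ∈ s, n ≤ f i) : x ^ n ∣ (∏ i ∈ s, (1 - x ^ f i)) - 1 := by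
  refine prod_induction _ (fun y => x ^ n ∣ y - 1) (fun y z hy hz => ?_) (by simp) fun i hi => ?_
  · rw [show y * z - 1 = (y - 1) * z + (z - 1) by ring]
    exact dvd_add (dvd_mul_of_dvd_left hy z) hz
  · rw [sub_sub_cancel_left]
    exact (pow_dvd_pow x (h i hi)).neg_right

namespace PowerSeries

theorem coeff_mul_prod_one_sub_X_pow {ι : Type*} (p : R⟦X⟧) {D : ℕ} {s : Finset ι}
    {f : ι → ℕ} (h : ∀ i ∈ s, D < f i) : coeff D (p * ∏ i ∈ s, (1 - X ^ f i)) = coeff D p := by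
  obtain ⟨r, hr⟩ := pow_dvd_prod_one_sub_pow_sub_one (X : R⟦X⟧) (n := D + 1) h
  have hhigh : coeff D (p * (X ^ (D + 1) * r)) = 0 :=
    (X_pow_dvd_iff (n := D + 1)).mp ⟨p * r, by ring⟩ D (by omega)
  rw [← sub_add_cancel (∏ i ∈ s, _) 1, hr, mul_add, mul_one, map_add, hhigh, zero_add]

theorem isUnit_qPochhammer {q : R⟦X⟧} (hq : constantCoeff q = 0) (n : ℕ) :
    IsUnit (qPochhammer q n) := by
  rw [isUnit_iff_constantCoeff, qPochhammer, map_prod]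
  refine IsUnit.prod_iff.mpr fun i hi => ?_
  rw [map_sub, map_one, map_pow, hq, zero_pow (by simp at hi; omega), sub_zero]
  exact isUnit_one

theorem qPochhammer_mul_coeff_jacobiProd_X {n B : ℕ} (h : n ≤ B) :
    qPochhammer ((X : R⟦X⟧) ^ 2) B * (jacobiProd (X : R⟦X⟧) B).coeff n
      = X ^ n ^ 2 * (∏ i ∈ Ioc (B - n) B, (1 - X ^ (2 * i)))
          * ∏ i ∈ Ioc (B + n) (2 * B), (1 - X ^ (2 * i)) := by
  have key :=
    coeff_jacobiProd_mul_qPochhammer (X : R⟦X⟧) B n (B - n) (B + n) (by omega) (by omega)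
  rw [Int.natAbs_natCast, show B - n + (B + n) = 2 * B by omega,
    ← qPochhammer_mul_prod_Ioc _ (show B + n ≤ 2 * B by omega)] at key
  rw [← qPochhammer_mul_prod_Ioc _ (show B - n ≤ B by omega),
    ← (isUnit_qPochhammer (q := X ^ 2) (by simp) (B + n)).mul_left_inj]
  simp only [← pow_mul] at key ⊢
  linear_combination (∏ i ∈ Ioc (B - n) B, (1 - X ^ (2 * i) : R⟦X⟧)) * key

end PowerSeries
end

/-- Jacobi triple product, second form:
`∑_{j∈ℤ} z^j q^{j²} = ∏_{n≥1} (1-q^{2n})(1+zq^{2n-1})(1+z⁻¹q^{2n-1})`,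
as formal Laurent series in `z` over `ℤ[[q]]`, expressed coefficient-wise in `z` (via
Hahn series in `z`) and in `q` (via truncations of the infinite product). -/
theorem jacobi_triple_product_second_form (j : ℤ) (D : ℕ) :
    ∃ B0 : ℕ, ∀ B ≥ B0,
      PowerSeries.coeff (R := ℤ) D ((PowerSeries.X : PowerSeries ℤ) ^ (j * j).toNat)
      = PowerSeries.coeff (R := ℤ) D
          ((∏ m ∈ Finset.Icc 1 B,
              (HahnSeries.C (1 - (PowerSeries.X : PowerSeries ℤ) ^ (2 * m)) *
               (1 + HahnSeries.single (1 : ℤ) ((PowerSeries.X : PowerSeries ℤ) ^ (2 * m - 1))) *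
               (1 + HahnSeries.single (-1 : ℤ) ((PowerSeries.X : PowerSeries ℤ) ^ (2 * m - 1))))).coeff j) := by
  refine ⟨D + j.natAbs, fun B hB => ?_⟩
  rw [prod_C_mul_eq_C_qPochhammer_mul_jacobiProd, HahnSeries.C_apply,
    HahnSeries.coeff_single_zero_mul, ← coeff_jacobiProd_natAbs,
    qPochhammer_mul_coeff_jacobiProd_X (by omega),
    coeff_mul_prod_one_sub_X_pow _ fun i hi => by simp only [mem_Ioc] at hi; omega,
    coeff_mul_prod_one_sub_X_pow _ fun i hi => by simp only [mem_Ioc] at hi; omega,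
    ← Int.natAbs_mul_self, Int.toNat_natCast, sq]
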